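/- arXiv:1506.01655 — 2 statements merged into one kernel-verified Lean document; each statement's English description precedes it below -/
import Mathlib

section
/- Let (u, θ, q) be a smooth solution of the thermoviscoelastic system with second sound satisfying boundary conditions (D). Then for all t > 0, the first-order energy satisfies dE₁/dt (t) = −2 ∫₀ᴸ δ(x) u_xt(x,t)² dx − β ∫₀ᴸ q(x,t)² dx. -/
open MeasureTheory Set intervalIntegral

noncomputable section

/-- Time derivative of a function of `(x, t)` (curried as `x ↦ t ↦ f x t`). -/
def pdt (f : ℝ → ℝ → ℝ) : ℝ → ℝ → ℝ := fun x t => deriv (f x) t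

/-- Space derivative of a function of `(x, t)`. -/
def pdx (f : ℝ → ℝ → ℝ) : ℝ → ℝ → ℝ := fun x t => deriv (fun y => f y t) x


open Function Filter Topology

section infra

variable {w : ℝ → ℝ → ℝ}

lemma hasDerivAt_t_fderiv (hw : ContDiff ℝ (⊤ : ℕ∞) (uncurry w)) (x t : ℝ) :
    HasDerivAt (w x) (fderiv ℝ (uncurry w) (x, t) (0, 1)) t := by
  have h1 : HasDerivAt (fun s : ℝ => (x, s)) ((0 : ℝ), (1 : ℝ)) t :=
    (hasDerivAt_const t x).prodMk (hasDerivAt_id t)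
  exact ((hw.differentiable (by simp) (x, t)).hasFDerivAt).comp_hasDerivAt t h1

lemma hasDerivAt_x_fderiv (hw : ContDiff ℝ (⊤ : ℕ∞) (uncurry w)) (x t : ℝ) :
    HasDerivAt (fun y => w y t) (fderiv ℝ (uncurry w) (x, t) (1, 0)) x := by
  have h1 : HasDerivAt (fun y : ℝ => (y, t)) ((1 : ℝ), (0 : ℝ)) x :=
    (hasDerivAt_id x).prodMk (hasDerivAt_const x t)
  exact ((hw.differentiable (by simp) (x, t)).hasFDerivAt).comp_hasDerivAt x h1

lemma pdt_eq_fderiv (hw : ContDiff ℝ (⊤ : ℕ∞) (uncurry w)) (x t : ℝ) :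
    pdt w x t = fderiv ℝ (uncurry w) (x, t) (0, 1) :=
  (hasDerivAt_t_fderiv hw x t).deriv

lemma pdx_eq_fderiv (hw : ContDiff ℝ (⊤ : ℕ∞) (uncurry w)) (x t : ℝ) :
    pdx w x t = fderiv ℝ (uncurry w) (x, t) (1, 0) :=
  (hasDerivAt_x_fderiv hw x t).deriv

lemma hasDerivAt_pdt (hw : ContDiff ℝ (⊤ : ℕ∞) (uncurry w)) (x t : ℝ) :
    HasDerivAt (w x) (pdt w x t) t := by
  rw [pdt_eq_fderiv hw x t]; exact hasDerivAt_t_fderiv hw x t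

lemma hasDerivAt_pdx (hw : ContDiff ℝ (⊤ : ℕ∞) (uncurry w)) (x t : ℝ) :
    HasDerivAt (fun y => w y t) (pdx w x t) x := by
  rw [pdx_eq_fderiv hw x t]; exact hasDerivAt_x_fderiv hw x t

lemma contDiff_fderiv_apply {F : ℝ × ℝ → ℝ} (hF : ContDiff ℝ (⊤ : ℕ∞) F) (v : ℝ × ℝ) :
    ContDiff ℝ (⊤ : ℕ∞) (fun z => fderiv ℝ F z v) :=
  (hF.fderiv_right (by simp)).clm_apply contDiff_const

lemma contDiff_pdt (hw : ContDiff ℝ (⊤ : ℕ∞) (uncurry w)) : ContDiff ℝ (⊤ : ℕ∞) (uncurry (pdt w)) := by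
  have : uncurry (pdt w) = fun z : ℝ × ℝ => fderiv ℝ (uncurry w) z (0, 1) := by
    funext z
    exact pdt_eq_fderiv hw z.1 z.2
  rw [this]
  exact contDiff_fderiv_apply hw _

lemma contDiff_pdx (hw : ContDiff ℝ (⊤ : ℕ∞) (uncurry w)) : ContDiff ℝ (⊤ : ℕ∞) (uncurry (pdx w)) := by
  have : uncurry (pdx w) = fun z : ℝ × ℝ => fderiv ℝ (uncurry w) z (1, 0) := by
    funext z
    exact pdx_eq_fderiv hw z.1 z.2
  rw [this]
  exact contDiff_fderiv_apply hw _

/-- Clairaut's theorem for smooth functions of two real variables. -/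
lemma pdx_pdt_comm (hw : ContDiff ℝ (⊤ : ℕ∞) (uncurry w)) (x t : ℝ) :
    pdx (pdt w) x t = pdt (pdx w) x t := by
  set W := uncurry w with hW
  set f' : ℝ × ℝ → (ℝ × ℝ) →L[ℝ] ℝ := fderiv ℝ W with hf'
  have hdW : ∀ y, HasFDerivAt W (f' y) y := fun y => (hw.differentiable (by simp) y).hasFDerivAt
  have hf'smooth : ContDiff ℝ (⊤ : ℕ∞) f' := hw.fderiv_right (by simp)
  have hdf' : ∀ z, HasFDerivAt f' (fderiv ℝ f' z) z :=
    fun z => (hf'smooth.differentiable (by simp) z).hasFDerivAt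
  have hsymm := second_derivative_symmetric hdW (hdf' (x, t)) (1, 0) (0, 1)
  -- compute pdx (pdt w) x t
  have h1 : pdx (pdt w) x t = (fderiv ℝ f' (x, t) (1, 0)) (0, 1) := by
    have hcurve : HasDerivAt (fun y : ℝ => (y, t)) ((1 : ℝ), (0 : ℝ)) x :=
      (hasDerivAt_id x).prodMk (hasDerivAt_const x t)
    have h3 : HasDerivAt (fun y : ℝ => f' (y, t)) (fderiv ℝ f' (x, t) (1, 0)) x :=
      (hdf' (x, t)).comp_hasDerivAt x hcurve
    have h4 : HasDerivAt (fun y : ℝ => f' (y, t) (0, 1)) ((fderiv ℝ f' (x, t) (1, 0)) (0, 1)) x :=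
      (ContinuousLinearMap.apply ℝ ℝ ((0 : ℝ), (1 : ℝ))).hasFDerivAt.comp_hasDerivAt x h3
    have h5 : (fun y : ℝ => pdt w y t) = fun y : ℝ => f' (y, t) (0, 1) := by
      funext y; exact pdt_eq_fderiv hw y t
    show deriv (fun y : ℝ => pdt w y t) x = _
    rw [h5]
    exact h4.deriv
  have h2 : pdt (pdx w) x t = (fderiv ℝ f' (x, t) (0, 1)) (1, 0) := by
    have hcurve : HasDerivAt (fun s : ℝ => (x, s)) ((0 : ℝ), (1 : ℝ)) t :=
      (hasDerivAt_const t x).prodMk (hasDerivAt_id t)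
    have h3 : HasDerivAt (fun s : ℝ => f' (x, s)) (fderiv ℝ f' (x, t) (0, 1)) t :=
      (hdf' (x, t)).comp_hasDerivAt t hcurve
    have h4 : HasDerivAt (fun s : ℝ => f' (x, s) (1, 0)) ((fderiv ℝ f' (x, t) (0, 1)) (1, 0)) t :=
      (ContinuousLinearMap.apply ℝ ℝ ((1 : ℝ), (0 : ℝ))).hasFDerivAt.comp_hasDerivAt t h3
    have h5 : (fun s : ℝ => pdx w x s) = fun s : ℝ => f' (x, s) (1, 0) := by
      funext s; exact pdx_eq_fderiv hw x s
    show deriv (fun s : ℝ => pdx w x s) t = _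
    rw [show (fun s : ℝ => pdx w x s) = pdx w x from rfl] at h5
    rw [h5]
    exact h4.deriv
  rw [h1, h2, hsymm]

end infra

section infra2

open MeasureTheory Set intervalIntegral Function Filter Topology

/-- Differentiation under the integral sign for `s ↦ ∫ x in 0..L, c x * G x s`. -/
lemma hasDerivAt_param_integral {L : ℝ} (hL : 0 ≤ L) {c : ℝ → ℝ}
    (hc : ContinuousOn c (Icc 0 L)) {G G' : ℝ → ℝ → ℝ}
    (hG : Continuous (uncurry G)) (hG' : Continuous (uncurry G'))
    (hd : ∀ x s, HasDerivAt (G x) (G' x s) s) (t : ℝ) :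
    HasDerivAt (fun s => ∫ x in (0:ℝ)..L, c x * G x s)
      (∫ x in (0:ℝ)..L, c x * G' x t) t := by
  have hIoc : Set.uIoc (0:ℝ) L = Ioc 0 L := uIoc_of_le hL
  have hsub : Set.uIoc (0:ℝ) L ⊆ Icc 0 L := by rw [hIoc]; exact Ioc_subset_Icc_self
  have hKcomp : IsCompact (Icc (0:ℝ) L ×ˢ Icc (t - 1) (t + 1)) :=
    isCompact_Icc.prod isCompact_Icc
  obtain ⟨M, hM⟩ := hKcomp.exists_bound_of_continuousOn hG'.continuousOn
  have hcmeas : AEStronglyMeasurable c (volume.restrict (Set.uIoc (0:ℝ) L)) := by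
    rw [hIoc]
    exact ((hc.mono Ioc_subset_Icc_self).aestronglyMeasurable measurableSet_Ioc)
  have hGsmeas : ∀ s : ℝ, AEStronglyMeasurable (fun x => c x * G x s)
      (volume.restrict (Set.uIoc (0:ℝ) L)) := fun s =>
    hcmeas.mul (hG.comp (continuous_id.prodMk continuous_const)).aestronglyMeasurable
  have huIcc : uIcc (0:ℝ) L = Icc 0 L := uIcc_of_le hL
  have hint : IntervalIntegrable (fun x => c x * G x t) volume 0 L := by
    apply ContinuousOn.intervalIntegrable
    rw [huIcc]
    exact hc.mul (hG.comp (continuous_id.prodMk continuous_const)).continuousOn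
  have hbound_int : IntervalIntegrable (fun x => |c x| * M) volume 0 L := by
    apply ContinuousOn.intervalIntegrable
    rw [huIcc]
    exact (hc.abs.mul continuousOn_const)
  refine (intervalIntegral.hasDerivAt_integral_of_dominated_loc_of_deriv_le
    (F := fun s x => c x * G x s) (F' := fun s x => c x * G' x s)
    (bound := fun x => |c x| * M) (Metric.ball_mem_nhds t zero_lt_one)
    (Filter.Eventually.of_forall hGsmeas) hint
    (hcmeas.mul (hG'.comp (continuous_id.prodMk continuous_const)).aestronglyMeasurable)
    ?_ hbound_int ?_).2
  · refine Filter.Eventually.of_forall fun x => fun hx s hs => ?_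
    have hxmem : x ∈ Icc (0:ℝ) L := hsub hx
    have hsmem : s ∈ Icc (t - 1) (t + 1) := by
      rw [Real.ball_eq_Ioo] at hs
      exact ⟨hs.1.le, hs.2.le⟩
    have := hM (x, s) ⟨hxmem, hsmem⟩
    rw [norm_mul]
    calc ‖c x‖ * ‖G' x s‖ ≤ ‖c x‖ * M := by
          exact mul_le_mul_of_nonneg_left this (norm_nonneg _)
      _ = |c x| * M := by rw [Real.norm_eq_abs]
  · exact Filter.Eventually.of_forall fun x => fun _ s _ => (hd x s).const_mul (c x)

/-- Sequential difference quotients converge to the derivative. -/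
lemma tendsto_diffquot {f : ℝ → ℝ} {x d : ℝ} (h : HasDerivAt f d x) :
    Tendsto (fun n : ℕ => (f (x + 1 / (n + 1)) - f x) * (n + 1)) atTop (𝓝 d) := by
  have hslope := hasDerivAt_iff_tendsto_slope.mp h
  have hpos : ∀ n : ℕ, (0:ℝ) < 1 / (n + 1) := fun n => by positivity
  have htend : Tendsto (fun n : ℕ => x + 1 / (n + 1)) atTop (𝓝[≠] x) := by
    apply tendsto_nhdsWithin_of_tendsto_nhds_of_eventually_within
    · have : Tendsto (fun n : ℕ => 1 / ((n:ℝ) + 1)) atTop (𝓝 0) :=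
        tendsto_one_div_add_atTop_nhds_zero_nat
      have := tendsto_const_nhds.add this (f := fun _ : ℕ => x)
      simpa using this
    · exact Filter.Eventually.of_forall fun n => by
        simp only [mem_compl_iff, mem_singleton_iff]
        intro hcontra
        have := hpos n
        nlinarith [add_right_cancel (a := x) (b := 1 / ((n:ℝ)+1)) (c := 0)]
  have := hslope.comp htend
  apply this.congr
  intro n
  rw [Function.comp_apply, slope_def_field, add_sub_cancel_left, div_div_eq_mul_div, div_one]

/-- FTC for Lipschitz functions: `∫ deriv F = F b - F a`. -/
lemma lipschitz_integral_deriv {F : ℝ → ℝ} {K : NNReal} (hF : LipschitzWith K F)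
    {a b : ℝ} : ∫ x in a..b, deriv F x = F b - F a := by
  have hcont : Continuous F := hF.continuous
  set Fn : ℕ → ℝ → ℝ := fun n x => (F (x + 1 / (n + 1)) - F x) * (n + 1) with hFn
  -- Step A: ∫ Fn n → ∫ deriv F
  have stepA : Tendsto (fun n => ∫ x in a..b, Fn n x) atTop (𝓝 (∫ x in a..b, deriv F x)) := by
    apply intervalIntegral.tendsto_integral_filter_of_dominated_convergence (bound := fun _ => (K:ℝ))
    · exact Filter.Eventually.of_forall fun n =>
        (((hcont.comp (continuous_id.add continuous_const)).sub hcont).mul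
          continuous_const).aestronglyMeasurable
    · refine Filter.Eventually.of_forall fun n => Filter.Eventually.of_forall fun x => fun _ => ?_
      have h1 : |F (x + 1 / (n + 1)) - F x| ≤ (K:ℝ) * (1 / (n + 1)) := by
        have h0 : (0:ℝ) < 1 / ((n:ℝ) + 1) := by positivity
        have := hF.dist_le_mul (x + 1 / (n + 1)) x
        rwa [Real.dist_eq, Real.dist_eq, add_sub_cancel_left, abs_of_pos h0] at this
      have h2 : (0:ℝ) < (n:ℝ) + 1 := by positivity
      rw [hFn]
      rw [Real.norm_eq_abs, abs_mul, abs_of_pos h2]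
      calc |F (x + 1 / (n + 1)) - F x| * ((n:ℝ) + 1)
          ≤ ((K:ℝ) * (1 / (n + 1))) * ((n:ℝ) + 1) := by
            exact mul_le_mul_of_nonneg_right h1 h2.le
        _ = (K:ℝ) := by field_simp
    · exact intervalIntegrable_const
    · have hae : ∀ᵐ x : ℝ, DifferentiableAt ℝ F x := hF.ae_differentiableAt
      filter_upwards [hae] with x hx _
      exact tendsto_diffquot hx.hasDerivAt
  -- Step B: compute ∫ Fn n
  have hFint : ∀ c d : ℝ, IntervalIntegrable F volume c d := fun c d =>
    hcont.intervalIntegrable c d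
  have stepB : ∀ n : ℕ, ∫ x in a..b, Fn n x =
      ((∫ x in b..(b + 1/(n+1)), F x) - ∫ x in a..(a + 1/(n+1)), F x) * (n + 1) := by
    intro n
    have h1 : ∫ x in a..b, Fn n x =
        ((∫ x in a..b, F (x + 1/(n+1))) - ∫ x in a..b, F x) * (n + 1) := by
      rw [hFn]
      rw [intervalIntegral.integral_mul_const, intervalIntegral.integral_sub
        (show IntervalIntegrable (fun x => F (x + 1/((n:ℝ)+1))) volume a b from
          ((hcont.comp (continuous_id.add continuous_const)).intervalIntegrable a b))
        (hFint a b)]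
    rw [h1, intervalIntegral.integral_comp_add_right]
    have e1 : (∫ x in a..(a + 1/(n+1)), F x) + ∫ x in (a + 1/(n+1))..(b + 1/(n+1)), F x
        = ∫ x in a..(b + 1/(n+1)), F x := intervalIntegral.integral_add_adjacent_intervals
          (hFint _ _) (hFint _ _)
    have e2 : (∫ x in a..b, F x) + ∫ x in b..(b + 1/(n+1)), F x
        = ∫ x in a..(b + 1/(n+1)), F x := intervalIntegral.integral_add_adjacent_intervals
          (hFint _ _) (hFint _ _)
    have heq : (∫ x in (a + 1/(n+1))..(b + 1/(n+1)), F x) - ∫ x in a..b, F x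
        = (∫ x in b..(b + 1/(n+1)), F x) - ∫ x in a..(a + 1/(n+1)), F x := by linarith
    rw [heq]
  -- Step C: limits of primitives
  have stepC : ∀ c : ℝ, Tendsto (fun n : ℕ => (∫ x in c..(c + 1/(n+1)), F x) * (n + 1))
      atTop (𝓝 (F c)) := by
    intro c
    have hP : HasDerivAt (fun y => ∫ x in c..y, F x) (F c) c :=
      (hcont.integral_hasStrictDerivAt c c).hasDerivAt
    have := tendsto_diffquot hP
    simpa using this
  have stepBC : Tendsto (fun n => ∫ x in a..b, Fn n x) atTop (𝓝 (F b - F a)) := by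
    have := ((stepC b).sub (stepC a))
    apply this.congr
    intro n
    rw [stepB n]
    ring
  exact tendsto_nhds_unique stepA stepBC

end infra2

section infra3

open MeasureTheory Set intervalIntegral Function Filter Topology

/-- Product of Lipschitz functions on a compact set is Lipschitz. -/
lemma exists_lipschitzOnWith_mul {f g : ℝ → ℝ} {s : Set ℝ} (hs : IsCompact s)
    (hf : ∃ K, LipschitzOnWith K f s) (hg : ∃ K, LipschitzOnWith K g s) :
    ∃ K, LipschitzOnWith K (fun x => f x * g x) s := by
  obtain ⟨Kf, hKf⟩ := hf
  obtain ⟨Kg, hKg⟩ := hg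
  obtain ⟨Mf, hMf⟩ := hs.exists_bound_of_continuousOn hKf.continuousOn
  obtain ⟨Mg, hMg⟩ := hs.exists_bound_of_continuousOn hKg.continuousOn
  refine ⟨Real.toNNReal (Mf * Kg + Mg * Kf), LipschitzOnWith.of_dist_le_mul fun x hx y hy => ?_⟩
  rw [Real.dist_eq, Real.dist_eq]
  have h1 : f x * g x - f y * g y = f x * (g x - g y) + g y * (f x - f y) := by ring
  have h2 : |f x * g x - f y * g y| ≤ |f x| * |g x - g y| + |g y| * |f x - f y| := by
    rw [h1]
    calc |f x * (g x - g y) + g y * (f x - f y)|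
        ≤ |f x * (g x - g y)| + |g y * (f x - f y)| := abs_add_le _ _
      _ = |f x| * |g x - g y| + |g y| * |f x - f y| := by rw [abs_mul, abs_mul]
  have hgl : |g x - g y| ≤ (Kg:ℝ) * |x - y| := by
    have := hKg.dist_le_mul x hx y hy
    rwa [Real.dist_eq, Real.dist_eq] at this
  have hfl : |f x - f y| ≤ (Kf:ℝ) * |x - y| := by
    have := hKf.dist_le_mul x hx y hy
    rwa [Real.dist_eq, Real.dist_eq] at this
  have hMf' : |f x| ≤ Mf := by simpa using hMf x hx
  have hMg' : |g y| ≤ Mg := by simpa using hMg y hy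
  have hfx : (0:ℝ) ≤ |f x| := abs_nonneg _
  have hgy : (0:ℝ) ≤ |g y| := abs_nonneg _
  have hxy : (0:ℝ) ≤ |x - y| := abs_nonneg _
  calc |f x * g x - f y * g y| ≤ |f x| * ((Kg:ℝ) * |x - y|) + |g y| * ((Kf:ℝ) * |x - y|) := by
        refine h2.trans (add_le_add ?_ ?_)
        · exact mul_le_mul_of_nonneg_left hgl hfx
        · exact mul_le_mul_of_nonneg_left hfl hgy
    _ ≤ Mf * ((Kg:ℝ) * |x - y|) + Mg * ((Kf:ℝ) * |x - y|) := by
        refine add_le_add ?_ ?_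
        · exact mul_le_mul_of_nonneg_right hMf' (by positivity)
        · exact mul_le_mul_of_nonneg_right hMg' (by positivity)
    _ = (Mf * Kg + Mg * Kf) * |x - y| := by ring
    _ ≤ (Real.toNNReal (Mf * Kg + Mg * Kf) : ℝ) * |x - y| := by
        exact mul_le_mul_of_nonneg_right (Real.le_coe_toNNReal _) hxy

/-- A smooth function is Lipschitz on a compact interval. -/
lemma exists_lipschitzOnWith_of_contDiff {φ : ℝ → ℝ} (hφ : ContDiff ℝ (⊤ : ℕ∞) φ) (a b : ℝ) :
    ∃ K, LipschitzOnWith K φ (Icc a b) := by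
  have hder : Continuous (deriv φ) := hφ.continuous_deriv (by simp)
  obtain ⟨M, hM⟩ := (isCompact_Icc (a := a) (b := b)).exists_bound_of_continuousOn
    hder.continuousOn
  refine ⟨Real.toNNReal M, (convex_Icc a b).lipschitzOnWith_of_nnnorm_deriv_le
    (fun x _ => hφ.differentiable (by simp) x) ?_⟩
  intro x hx
  have := hM x hx
  rw [← NNReal.coe_le_coe]
  calc (‖deriv φ x‖₊ : ℝ) = ‖deriv φ x‖ := rfl
    _ ≤ M := this
    _ ≤ _ := Real.le_coe_toNNReal _

/-- Lipschitz function whose Lean `deriv` agrees with a continuous function on an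
open interval is actually differentiable there with that derivative. -/
lemma hasDerivAt_of_lipschitzOn {F g : ℝ → ℝ} {K : NNReal} {a b : ℝ}
    (hF : LipschitzOnWith K F (Icc a b)) (hg : ContinuousOn g (Ioo a b))
    (hder : ∀ x ∈ Ioo a b, deriv F x = g x) :
    ∀ x ∈ Ioo a b, HasDerivAt F (g x) x := by
  obtain ⟨G, hG, hFG⟩ := hF.extend_real
  intro x hx
  have hnhds : ∀ y ∈ Ioo a b, Ioo a b ∈ 𝓝 y := fun y hy => isOpen_Ioo.mem_nhds hy
  have hFGev : ∀ y ∈ Ioo a b, F =ᶠ[𝓝 y] G := fun y hy =>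
    Filter.eventuallyEq_of_mem (hnhds y hy) fun z hz => hFG (Ioo_subset_Icc_self hz)
  have hderG : ∀ y ∈ Ioo a b, deriv G y = g y := fun y hy => by
    rw [← (hFGev y hy).deriv_eq]; exact hder y hy
  -- FTC for the globally Lipschitz G
  have hftc : ∀ c d : ℝ, ∫ s in c..d, deriv G s = G d - G c := fun c d =>
    lipschitz_integral_deriv hG
  have key : ∀ y ∈ Ioo a b, G y = G x + ∫ s in x..y, g s := by
    intro y hy
    have hsub : uIcc x y ⊆ Ioo a b := by
      rw [uIcc_eq_union]
      refine union_subset ?_ ?_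
      · exact Icc_subset_Ioo hx.1 hy.2
      · exact Icc_subset_Ioo hy.1 hx.2
    have hcongr : ∫ s in x..y, deriv G s = ∫ s in x..y, g s := by
      apply intervalIntegral.integral_congr
      intro z hz
      exact hderG z (hsub hz)
    rw [← hcongr, hftc x y]
    ring
  have hP : HasDerivAt (fun y => G x + ∫ s in x..y, g s) (g x) x :=
    (intervalIntegral.integral_hasDerivAt_right IntervalIntegrable.refl
      (hg.stronglyMeasurableAtFilter isOpen_Ioo x hx)
      (hg.continuousAt (hnhds x hx))).const_add (G x)
  have hGP : HasDerivAt G (g x) x := by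
    apply hP.congr_of_eventuallyEq
    exact Filter.eventuallyEq_of_mem (hnhds x hx) fun z hz => key z hz
  exact hGP.congr_of_eventuallyEq (hFGev x hx)

end infra3

section infra4

open MeasureTheory Set intervalIntegral Function Filter Topology

lemma integral_congr_Ioo {f g : ℝ → ℝ} {L : ℝ} (hL : 0 ≤ L)
    (h : ∀ x ∈ Ioo (0:ℝ) L, f x = g x) :
    ∫ x in (0:ℝ)..L, f x = ∫ x in (0:ℝ)..L, g x := by
  apply intervalIntegral.integral_congr_ae
  have h1 : ∀ᵐ x : ℝ, x ≠ L := by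
    refine ae_iff.mpr ?_
    simp only [not_not, setOf_eq_eq_singleton]
    exact Real.volume_singleton
  filter_upwards [h1] with x hxne hmem
  rw [uIoc_of_le hL] at hmem
  exact h x ⟨hmem.1, lt_of_le_of_ne hmem.2 hxne⟩

lemma integral_bilin_boundary {f g f' g' : ℝ → ℝ} {L : ℝ} (hL : 0 ≤ L)
    (hf : ContinuousOn f (Icc 0 L)) (hg : ContinuousOn g (Icc 0 L))
    (hf' : ∀ x ∈ Ioo (0:ℝ) L, HasDerivAt f (f' x) x)
    (hg' : ∀ x ∈ Ioo (0:ℝ) L, HasDerivAt g (g' x) x)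
    (hint : IntervalIntegrable (fun x => f' x * g x + f x * g' x) volume 0 L) :
    ∫ x in (0:ℝ)..L, (f' x * g x + f x * g' x) = f L * g L - f 0 * g 0 :=
  intervalIntegral.integral_eq_sub_of_hasDerivAt_of_le hL (hf.mul hg)
    (fun x hx => (hf' x hx).mul (hg' x hx)) hint

lemma hasDerivAt_sq {f : ℝ → ℝ} {d s : ℝ} (h : HasDerivAt f d s) :
    HasDerivAt (fun y => f y ^ 2) (2 * f s * d) s := by
  simpa using h.fun_pow 2

lemma pdt_boundary_zero {u : ℝ → ℝ → ℝ} {x₀ : ℝ} (h : ∀ s : ℝ, 0 ≤ s → u x₀ s = 0)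
    {t : ℝ} (ht : 0 < t) : pdt u x₀ t = 0 := by
  have hev : u x₀ =ᶠ[𝓝 t] fun _ => (0:ℝ) := by
    filter_upwards [isOpen_Ioi.mem_nhds (show t ∈ Ioi (0:ℝ) from ht)] with s hs
    exact h s (le_of_lt hs)
  show deriv (u x₀) t = 0
  rw [hev.deriv_eq]
  exact deriv_const t 0

end infra4

/-- A smooth solution of the thermoviscoelastic system with second sound:
`u, θ, q` are `C^∞` and the three PDEs hold on `(0, L) × (0, ∞)`. -/
def IsSmoothSol (L η β κ τ : ℝ) (m δ p : ℝ → ℝ) (u θ q : ℝ → ℝ → ℝ) : Prop :=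
  ContDiff ℝ (⊤ : ℕ∞) (Function.uncurry u) ∧ ContDiff ℝ (⊤ : ℕ∞) (Function.uncurry θ) ∧
    ContDiff ℝ (⊤ : ℕ∞) (Function.uncurry q) ∧
    ∀ x ∈ Ioo (0 : ℝ) L, ∀ t : ℝ, 0 < t →
      (m x * pdt (pdt u) x t
          - pdx (fun y s => p y * pdx u y s + 2 * δ y * pdt (pdx u) y s) x t
          + η * pdx θ x t = 0) ∧
      (pdt θ x t + κ * pdx q x t + η * pdt (pdx u) x t = 0) ∧
      (τ * pdt q x t + β * q x t + κ * pdx θ x t = 0)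

/-- Boundary conditions (D): clamped structure, temperature zero at both ends. -/
def BCD (L : ℝ) (u θ : ℝ → ℝ → ℝ) : Prop :=
  ∀ t : ℝ, 0 ≤ t → u 0 t = 0 ∧ u L t = 0 ∧ θ 0 t = 0 ∧ θ L t = 0

/-- The first-order energy `E₁`. -/
def energy1 (L τ : ℝ) (m p : ℝ → ℝ) (u θ q : ℝ → ℝ → ℝ) (t : ℝ) : ℝ :=
  (1 / 2) * ((∫ x in (0 : ℝ)..L, p x * (pdx u x t) ^ 2)
    + (∫ x in (0 : ℝ)..L, m x * (pdt u x t) ^ 2)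
    + (∫ x in (0 : ℝ)..L, (θ x t) ^ 2)
    + τ * ∫ x in (0 : ℝ)..L, (q x t) ^ 2)

theorem first_energy_dissipation
    (L η β κ τ : ℝ) (hL : 0 < L) (hη : 0 < η) (hβ : 0 < β) (hκ : 0 < κ) (hτ : 0 < τ)
    (m δ p : ℝ → ℝ)
    (hmLip : ∃ K, LipschitzOnWith K m (Icc 0 L))
    (hδLip : ∃ K, LipschitzOnWith K δ (Icc 0 L))
    (hpLip : ∃ K, LipschitzOnWith K p (Icc 0 L))
    (hmpos : ∀ x ∈ Icc (0 : ℝ) L, 0 < m x)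
    (hδpos : ∀ x ∈ Icc (0 : ℝ) L, 0 < δ x)
    (hppos : ∀ x ∈ Icc (0 : ℝ) L, 0 < p x)
    (u θ q : ℝ → ℝ → ℝ)
    (hsol : IsSmoothSol L η β κ τ m δ p u θ q)
    (hbc : BCD L u θ) :
    ∀ t : ℝ, 0 < t →
      HasDerivAt (energy1 L τ m p u θ q)
        (-2 * (∫ x in (0 : ℝ)..L, δ x * (pdt (pdx u) x t) ^ 2)
          - β * ∫ x in (0 : ℝ)..L, (q x t) ^ 2) t := by
  
  obtain ⟨hu, hθ, hq, hpde⟩ := hsol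
  intro t ht
  have hL0 : (0:ℝ) ≤ L := hL.le
  -- second order smoothness
  have hux := contDiff_pdx hu
  have hut := contDiff_pdt hu
  have huxt := contDiff_pdt hux
  have hutt := contDiff_pdt hut
  have hθx := contDiff_pdx hθ
  have hθt := contDiff_pdt hθ
  have hqx := contDiff_pdx hq
  have hqt := contDiff_pdt hq
  -- slice helpers
  have sc : ∀ {w : ℝ → ℝ → ℝ}, ContDiff ℝ (⊤ : ℕ∞) (uncurry w) → Continuous (fun x => w x t) :=
    fun hw => hw.continuous.comp (continuous_id.prodMk continuous_const)
  have scd : ∀ {w : ℝ → ℝ → ℝ}, ContDiff ℝ (⊤ : ℕ∞) (uncurry w) → ContDiff ℝ (⊤ : ℕ∞) (fun x : ℝ => w x t) :=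
    fun hw => hw.comp (contDiff_id.prodMk contDiff_const)
  have intCont : ∀ {f : ℝ → ℝ}, ContinuousOn f (Icc 0 L) → IntervalIntegrable f volume 0 L :=
    fun hf => by
      apply ContinuousOn.intervalIntegrable
      rwa [uIcc_of_le hL0]
  obtain ⟨Km, hKm⟩ := hmLip
  obtain ⟨Kδ, hKδ⟩ := hδLip
  obtain ⟨Kp, hKp⟩ := hpLip
  have cont_m : ContinuousOn m (Icc 0 L) := hKm.continuousOn
  have cont_δ : ContinuousOn δ (Icc 0 L) := hKδ.continuousOn
  have cont_p : ContinuousOn p (Icc 0 L) := hKp.continuousOn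
  -- Step 1: differentiate under the integral sign
  have h1 : HasDerivAt (fun s => ∫ x in (0:ℝ)..L, p x * (pdx u x s) ^ 2)
      (∫ x in (0:ℝ)..L, p x * (2 * pdx u x t * pdt (pdx u) x t)) t := by
    exact hasDerivAt_param_integral hL0 cont_p
      (G := fun x s => (pdx u x s) ^ 2)
      (G' := fun x s => 2 * pdx u x s * pdt (pdx u) x s)
      (hux.continuous.fun_pow 2)
      ((continuous_const.fun_mul hux.continuous).fun_mul huxt.continuous)
      (fun x s => hasDerivAt_sq (hasDerivAt_pdt hux x s)) t
  have h2 : HasDerivAt (fun s => ∫ x in (0:ℝ)..L, m x * (pdt u x s) ^ 2)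
      (∫ x in (0:ℝ)..L, m x * (2 * pdt u x t * pdt (pdt u) x t)) t := by
    exact hasDerivAt_param_integral hL0 cont_m
      (G := fun x s => (pdt u x s) ^ 2)
      (G' := fun x s => 2 * pdt u x s * pdt (pdt u) x s)
      (hut.continuous.fun_pow 2)
      ((continuous_const.fun_mul hut.continuous).fun_mul hutt.continuous)
      (fun x s => hasDerivAt_sq (hasDerivAt_pdt hut x s)) t
  have h3' : HasDerivAt (fun s => ∫ x in (0:ℝ)..L, (1:ℝ) * (θ x s) ^ 2)
      (∫ x in (0:ℝ)..L, (1:ℝ) * (2 * θ x t * pdt θ x t)) t := by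
    exact hasDerivAt_param_integral hL0 continuousOn_const
      (G := fun x s => (θ x s) ^ 2)
      (G' := fun x s => 2 * θ x s * pdt θ x s)
      (hθ.continuous.fun_pow 2)
      ((continuous_const.fun_mul hθ.continuous).fun_mul hθt.continuous)
      (fun x s => hasDerivAt_sq (hasDerivAt_pdt hθ x s)) t
  have h3 : HasDerivAt (fun s => ∫ x in (0:ℝ)..L, (θ x s) ^ 2)
      (∫ x in (0:ℝ)..L, 2 * θ x t * pdt θ x t) t := by
    simpa only [one_mul] using h3'
  have h4' : HasDerivAt (fun s => ∫ x in (0:ℝ)..L, (1:ℝ) * (q x s) ^ 2)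
      (∫ x in (0:ℝ)..L, (1:ℝ) * (2 * q x t * pdt q x t)) t := by
    exact hasDerivAt_param_integral hL0 continuousOn_const
      (G := fun x s => (q x s) ^ 2)
      (G' := fun x s => 2 * q x s * pdt q x s)
      (hq.continuous.fun_pow 2)
      ((continuous_const.fun_mul hq.continuous).fun_mul hqt.continuous)
      (fun x s => hasDerivAt_sq (hasDerivAt_pdt hq x s)) t
  have h4 : HasDerivAt (fun s => ∫ x in (0:ℝ)..L, (q x s) ^ 2)
      (∫ x in (0:ℝ)..L, 2 * q x t * pdt q x t) t := by
    simpa only [one_mul] using h4'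
  have hE : HasDerivAt (energy1 L τ m p u θ q)
      ((1/2 : ℝ) * ((∫ x in (0:ℝ)..L, p x * (2 * pdx u x t * pdt (pdx u) x t))
        + (∫ x in (0:ℝ)..L, m x * (2 * pdt u x t * pdt (pdt u) x t))
        + (∫ x in (0:ℝ)..L, 2 * θ x t * pdt θ x t)
        + τ * ∫ x in (0:ℝ)..L, 2 * q x t * pdt q x t)) t := by
    exact (((h1.add h2).add h3).add (h4.const_mul τ)).const_mul (1/2 : ℝ)
  -- boundary values
  have hb0 : pdt u 0 t = 0 := pdt_boundary_zero (fun s hs => (hbc s hs).1) ht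
  have hbL : pdt u L t = 0 := pdt_boundary_zero (fun s hs => (hbc s hs).2.1) ht
  have hth0 : θ 0 t = 0 := (hbc t ht.le).2.2.1
  have hthL : θ L t = 0 := (hbc t ht.le).2.2.2
  -- spatial derivatives of time slices
  have hbder : ∀ x : ℝ, HasDerivAt (fun y => pdt u y t) (pdt (pdx u) x t) x := by
    intro x
    have h := hasDerivAt_pdx hut x t
    rwa [pdx_pdt_comm hu x t] at h
  have hthder : ∀ x : ℝ, HasDerivAt (fun y => θ y t) (pdx θ x t) x :=
    fun x => hasDerivAt_pdx hθ x t
  have hqder : ∀ x : ℝ, HasDerivAt (fun y => q y t) (pdx q x t) x :=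
    fun x => hasDerivAt_pdx hq x t
  -- slice continuity
  have cont_slice_a : Continuous fun x => pdx u x t := sc hux
  have cont_slice_c : Continuous fun x => pdt (pdx u) x t := sc huxt
  have cont_slice_b : Continuous fun x => pdt u x t := sc hut
  have cont_slice_d : Continuous fun x => pdt (pdt u) x t := sc hutt
  have cont_slice_th : Continuous fun x => θ x t := sc hθ
  have cont_slice_tx : Continuous fun x => pdx θ x t := sc hθx
  have cont_slice_q : Continuous fun x => q x t := sc hq
  have cont_slice_qx : Continuous fun x => pdx q x t := sc hqx
  -- the flux function
  set Ff : ℝ → ℝ := fun y => p y * pdx u y t + 2 * δ y * pdt (pdx u) y t with hFfdef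
  have hFfder : ∀ x ∈ Ioo (0:ℝ) L, deriv Ff x = m x * pdt (pdt u) x t + η * pdx θ x t := by
    intro x hx
    have hpde1 := (hpde x hx t ht).1
    have hrfl : pdx (fun y s => p y * pdx u y s + 2 * δ y * pdt (pdx u) y s) x t
        = deriv Ff x := rfl
    rw [hrfl] at hpde1
    linarith
  have haLip : ∃ K, LipschitzOnWith K (fun x => pdx u x t) (Icc 0 L) :=
    exists_lipschitzOnWith_of_contDiff (scd hux) 0 L
  have hcLip : ∃ K, LipschitzOnWith K (fun x => pdt (pdx u) x t) (Icc 0 L) :=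
    exists_lipschitzOnWith_of_contDiff (scd huxt) 0 L
  have h2δLip : ∃ K, LipschitzOnWith K (fun x => 2 * δ x) (Icc 0 L) :=
    exists_lipschitzOnWith_mul isCompact_Icc
      ⟨0, (LipschitzWith.const (2:ℝ)).lipschitzOnWith⟩ ⟨Kδ, hKδ⟩
  have hFfLip : ∃ K, LipschitzOnWith K Ff (Icc 0 L) := by
    obtain ⟨K1, hK1⟩ := exists_lipschitzOnWith_mul isCompact_Icc ⟨Kp, hKp⟩ haLip
    obtain ⟨K2, hK2⟩ := exists_lipschitzOnWith_mul isCompact_Icc h2δLip hcLip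
    exact ⟨K1 + K2, hK1.add hK2⟩
  have cont_Ff : ContinuousOn Ff (Icc 0 L) := by
    rw [hFfdef]
    exact (cont_p.mul cont_slice_a.continuousOn).add
      ((continuousOn_const.mul cont_δ).mul cont_slice_c.continuousOn)
  have cont_g : ContinuousOn (fun x => m x * pdt (pdt u) x t + η * pdx θ x t) (Icc 0 L) :=
    (cont_m.mul cont_slice_d.continuousOn).add
      (continuousOn_const.mul cont_slice_tx.continuousOn)
  have hFf' : ∀ x ∈ Ioo (0:ℝ) L,
      HasDerivAt Ff (m x * pdt (pdt u) x t + η * pdx θ x t) x := by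
    obtain ⟨KF, hKF⟩ := hFfLip
    exact hasDerivAt_of_lipschitzOn hKF (cont_g.mono Ioo_subset_Icc_self) hFfder
  -- integration by parts
  have IBP1 : ∫ x in (0:ℝ)..L, (pdt (pdx u) x t * θ x t + pdt u x t * pdx θ x t) = 0 := by
    have h := integral_bilin_boundary hL0 cont_slice_b.continuousOn cont_slice_th.continuousOn
      (fun x _ => hbder x) (fun x _ => hthder x)
      (intCont ((cont_slice_c.mul cont_slice_th).continuousOn.add
        (cont_slice_b.mul cont_slice_tx).continuousOn))
    rw [hbL, hb0] at h
    simpa using h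
  have IBP2 : ∫ x in (0:ℝ)..L, (pdx θ x t * q x t + θ x t * pdx q x t) = 0 := by
    have h := integral_bilin_boundary hL0 cont_slice_th.continuousOn cont_slice_q.continuousOn
      (fun x _ => hthder x) (fun x _ => hqder x)
      (intCont ((cont_slice_tx.mul cont_slice_q).continuousOn.add
        (cont_slice_th.mul cont_slice_qx).continuousOn))
    rw [hthL, hth0] at h
    simpa using h
  have IBP3 : ∫ x in (0:ℝ)..L, (pdt (pdx u) x t * Ff x
      + pdt u x t * (m x * pdt (pdt u) x t + η * pdx θ x t)) = 0 := by
    have h := integral_bilin_boundary hL0 cont_slice_b.continuousOn cont_Ff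
      (fun x _ => hbder x) hFf'
      (intCont ((cont_slice_c.continuousOn.mul cont_Ff).add
        (cont_slice_b.continuousOn.mul cont_g)))
    rw [hbL, hb0] at h
    simpa using h
  -- split the IBP identities
  have split1 : (∫ x in (0:ℝ)..L, pdt (pdx u) x t * θ x t)
      + (∫ x in (0:ℝ)..L, pdt u x t * pdx θ x t) = 0 := by
    rw [← intervalIntegral.integral_add
      (intCont (cont_slice_c.fun_mul cont_slice_th).continuousOn)
      (intCont (cont_slice_b.fun_mul cont_slice_tx).continuousOn)]
    exact IBP1
  have split2 : (∫ x in (0:ℝ)..L, pdx θ x t * q x t)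
      + (∫ x in (0:ℝ)..L, θ x t * pdx q x t) = 0 := by
    rw [← intervalIntegral.integral_add
      (intCont (cont_slice_tx.fun_mul cont_slice_q).continuousOn)
      (intCont (cont_slice_th.fun_mul cont_slice_qx).continuousOn)]
    exact IBP2
  have split3 : (∫ x in (0:ℝ)..L, pdt (pdx u) x t * Ff x)
      + (∫ x in (0:ℝ)..L, pdt u x t * (m x * pdt (pdt u) x t + η * pdx θ x t)) = 0 := by
    rw [← intervalIntegral.integral_add
      (intCont (cont_slice_c.continuousOn.fun_mul cont_Ff))
      (intCont (cont_slice_b.continuousOn.fun_mul cont_g))]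
    exact IBP3
  -- expand ∫ c·Ff
  have sFf : (∫ x in (0:ℝ)..L, pdt (pdx u) x t * Ff x)
      = (∫ x in (0:ℝ)..L, p x * (pdx u x t * pdt (pdx u) x t))
        + 2 * ∫ x in (0:ℝ)..L, δ x * (pdt (pdx u) x t) ^ 2 := by
    have step : (∫ x in (0:ℝ)..L, pdt (pdx u) x t * Ff x)
        = ∫ x in (0:ℝ)..L, (p x * (pdx u x t * pdt (pdx u) x t)
          + 2 * (δ x * (pdt (pdx u) x t) ^ 2)) := by
      rw [hFfdef]
      exact intervalIntegral.integral_congr fun x _ => by ring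
    rw [step, intervalIntegral.integral_add
      (intCont (cont_p.fun_mul (cont_slice_a.fun_mul cont_slice_c).continuousOn))
      (intCont (continuousOn_const.fun_mul (cont_δ.fun_mul (cont_slice_c.fun_pow 2).continuousOn))),
      intervalIntegral.integral_const_mul]
  -- rewrite the four derivative values
  have sV1 : (∫ x in (0:ℝ)..L, p x * (2 * pdx u x t * pdt (pdx u) x t))
      = 2 * ∫ x in (0:ℝ)..L, p x * (pdx u x t * pdt (pdx u) x t) := by
    rw [← intervalIntegral.integral_const_mul]
    exact intervalIntegral.integral_congr fun x _ => by ring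
  have sV2 : (∫ x in (0:ℝ)..L, m x * (2 * pdt u x t * pdt (pdt u) x t))
      = 2 * (∫ x in (0:ℝ)..L, pdt u x t * (m x * pdt (pdt u) x t + η * pdx θ x t))
        + (-(2*η)) * ∫ x in (0:ℝ)..L, pdt u x t * pdx θ x t := by
    have step : (∫ x in (0:ℝ)..L, m x * (2 * pdt u x t * pdt (pdt u) x t))
        = ∫ x in (0:ℝ)..L,
          (2 * (pdt u x t * (m x * pdt (pdt u) x t + η * pdx θ x t))
            + (-(2*η)) * (pdt u x t * pdx θ x t)) :=
      intervalIntegral.integral_congr fun x _ => by ring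
    rw [step, intervalIntegral.integral_add
      (intCont (continuousOn_const.fun_mul (cont_slice_b.continuousOn.fun_mul cont_g)))
      (intCont (continuousOn_const.fun_mul (cont_slice_b.fun_mul cont_slice_tx).continuousOn)),
      intervalIntegral.integral_const_mul, intervalIntegral.integral_const_mul]
  have sV3 : (∫ x in (0:ℝ)..L, 2 * θ x t * pdt θ x t)
      = (-(2*κ)) * (∫ x in (0:ℝ)..L, θ x t * pdx q x t)
        + (-(2*η)) * ∫ x in (0:ℝ)..L, pdt (pdx u) x t * θ x t := by
    have step : (∫ x in (0:ℝ)..L, 2 * θ x t * pdt θ x t)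
        = ∫ x in (0:ℝ)..L, ((-(2*κ)) * (θ x t * pdx q x t)
            + (-(2*η)) * (pdt (pdx u) x t * θ x t)) := by
      apply integral_congr_Ioo hL0
      intro x hx
      have hpde2 := (hpde x hx t ht).2.1
      linear_combination (2 * θ x t) * hpde2
    rw [step, intervalIntegral.integral_add
      (intCont (continuousOn_const.fun_mul (cont_slice_th.fun_mul cont_slice_qx).continuousOn))
      (intCont (continuousOn_const.fun_mul (cont_slice_c.fun_mul cont_slice_th).continuousOn)),
      intervalIntegral.integral_const_mul, intervalIntegral.integral_const_mul]
  have sV4 : τ * (∫ x in (0:ℝ)..L, 2 * q x t * pdt q x t)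
      = (-(2*β)) * (∫ x in (0:ℝ)..L, (q x t) ^ 2)
        + (-(2*κ)) * ∫ x in (0:ℝ)..L, pdx θ x t * q x t := by
    rw [← intervalIntegral.integral_const_mul]
    have step : (∫ x in (0:ℝ)..L, τ * (2 * q x t * pdt q x t))
        = ∫ x in (0:ℝ)..L, ((-(2*β)) * ((q x t) ^ 2)
            + (-(2*κ)) * (pdx θ x t * q x t)) := by
      apply integral_congr_Ioo hL0
      intro x hx
      have hpde3 := (hpde x hx t ht).2.2
      linear_combination (2 * q x t) * hpde3
    rw [step, intervalIntegral.integral_add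
      (intCont (continuousOn_const.fun_mul (cont_slice_q.fun_pow 2).continuousOn))
      (intCont (continuousOn_const.fun_mul (cont_slice_tx.fun_mul cont_slice_q).continuousOn)),
      intervalIntegral.integral_const_mul, intervalIntegral.integral_const_mul]
  have hval : (1/2 : ℝ) * ((∫ x in (0:ℝ)..L, p x * (2 * pdx u x t * pdt (pdx u) x t))
        + (∫ x in (0:ℝ)..L, m x * (2 * pdt u x t * pdt (pdt u) x t))
        + (∫ x in (0:ℝ)..L, 2 * θ x t * pdt θ x t)
        + τ * ∫ x in (0:ℝ)..L, 2 * q x t * pdt q x t)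
      = -2 * (∫ x in (0 : ℝ)..L, δ x * (pdt (pdx u) x t) ^ 2)
          - β * ∫ x in (0 : ℝ)..L, (q x t) ^ 2 := by
    linear_combination (1/2) * sV1 + (1/2) * sV2 + (1/2) * sV3 + (1/2) * sV4
      - η * split1 - κ * split2 + split3 - sFf
  exact hval ▸ hE
end
end

section
/- Let u, w, θ, q : [0,L] → ℂ be smooth functions with w(0) = w(L) = 0 and θ(0) = θ(L) = 0. Then the real part of the expression ∫₀ᴸ p w′ · conj(u′) dx + ∫₀ᴸ (p u′ + 2δ w′ − η θ)′ · conj(w) dx + ∫₀ᴸ (−κ q′ − η w′) · conj(θ) dx − ∫₀ᴸ (κ θ′ + β q) · conj(q) dx equals −2 ∫₀ᴸ δ(x) |w′(x)|² dx − β ∫₀ᴸ |q(x)|² dx; in particular this real part is nonpositive (dissipativity of the generator). -/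
open MeasureTheory Set intervalIntegral Complex ComplexConjugate Filter Topology
noncomputable section

private lemma seq_slope {g : ℝ → ℂ} {x : ℝ} {d : ℂ} (h : HasDerivAt g d x) :
    Tendsto (fun n : ℕ => ((n : ℝ) + 1) • (g (x + ((n : ℝ) + 1)⁻¹) - g x)) atTop (𝓝 d) := by
  have hs := hasDerivAt_iff_tendsto_slope.1 h
  have hpos : ∀ n : ℕ, (0 : ℝ) < ((n : ℝ) + 1)⁻¹ := fun n => by positivity
  have hseq : Tendsto (fun n : ℕ => x + ((n : ℝ) + 1)⁻¹) atTop (𝓝[≠] x) := by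
    rw [tendsto_nhdsWithin_iff]
    constructor
    · have : Tendsto (fun n : ℕ => ((n : ℝ) + 1)⁻¹) atTop (𝓝 0) := by
        simpa using tendsto_one_div_add_atTop_nhds_zero_nat (𝕜 := ℝ)
      simpa using (tendsto_const_nhds (x := x)).add this
    · exact Eventually.of_forall fun n => by
        simp only [mem_compl_iff, mem_singleton_iff]
        nlinarith [hpos n]
  have := hs.comp hseq
  refine this.congr fun n => ?_
  have hne : ((n : ℝ) + 1) ≠ 0 := by positivity
  simp only [Function.comp_apply, slope]
  rw [show x + ((n : ℝ) + 1)⁻¹ - x = ((n : ℝ) + 1)⁻¹ by ring, inv_inv, vsub_eq_sub]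

private lemma ftc_lipschitz {K : NNReal} {f : ℝ → ℂ} (hf : LipschitzWith K f) {a b : ℝ}
    (hab : a ≤ b) : ∫ x in a..b, deriv f x = f b - f a := by
  have hc : Continuous f := hf.continuous
  set G : ℝ → ℂ := fun y => ∫ t in a..y, f t with hGdef
  have hG : ∀ y, HasDerivAt G (f y) y := fun y =>
    intervalIntegral.integral_hasDerivAt_right (hc.intervalIntegrable a y)
      (hc.stronglyMeasurable.stronglyMeasurableAtFilter) hc.continuousAt
  set Fn : ℕ → ℝ → ℂ := fun n x => ((n : ℝ) + 1) • (f (x + ((n : ℝ) + 1)⁻¹) - f x) with hFn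
  -- value of each integral
  have hFnint : ∀ n : ℕ, ∫ x in Ioc a b, Fn n x =
      ((n : ℝ) + 1) • ((G (b + ((n : ℝ) + 1)⁻¹) - G b) - (G (a + ((n : ℝ) + 1)⁻¹) - G a)) := by
    intro n
    set h : ℝ := ((n : ℝ) + 1)⁻¹ with hh
    have h1 : ∫ x in Ioc a b, Fn n x = ∫ x in a..b, Fn n x := by
      rw [intervalIntegral.integral_of_le hab]
    have hcont1 : Continuous fun x => f (x + h) := hc.comp (continuous_id.add continuous_const)
    rw [h1, hFn]
    simp only []
    rw [intervalIntegral.integral_smul]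
    congr 1
    rw [intervalIntegral.integral_sub (hcont1.intervalIntegrable a b) (hc.intervalIntegrable a b)]
    have h2 : (∫ x in a..b, f (x + h)) = ∫ x in a + h..b + h, f x :=
      intervalIntegral.integral_comp_add_right f h
    have h3 : (∫ x in a + h..b + h, f x) = G (b + h) - G (a + h) := by
      rw [hGdef]
      simp only []
      rw [← intervalIntegral.integral_interval_sub_left (hc.intervalIntegrable a (b+h))
        (hc.intervalIntegrable a (a+h))]
    have h4 : (∫ x in a..b, f x) = G b - G a := by
      rw [hGdef]; simp [intervalIntegral.integral_same]
    rw [h2, h3, h4]; ring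
  -- limit of the right-hand sides
  have hRHS : Tendsto (fun n : ℕ => ((n : ℝ) + 1) •
      ((G (b + ((n : ℝ) + 1)⁻¹) - G b) - (G (a + ((n : ℝ) + 1)⁻¹) - G a))) atTop
      (𝓝 (f b - f a)) := by
    have hb' := seq_slope (hG b)
    have ha' := seq_slope (hG a)
    have := hb'.sub ha'
    refine this.congr fun n => ?_
    simp only [smul_sub]
  -- dominated convergence
  have hmeas : ∀ n : ℕ, AEStronglyMeasurable (Fn n) (volume.restrict (Ioc a b)) := fun n => by
    show AEStronglyMeasurable (fun x => ((n : ℝ) + 1) • (f (x + ((n : ℝ) + 1)⁻¹) - f x)) _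
    exact Continuous.aestronglyMeasurable (by fun_prop)
  have hbound : ∀ n : ℕ, ∀ᵐ x ∂(volume.restrict (Ioc a b)), ‖Fn n x‖ ≤ (K : ℝ) := by
    intro n
    refine Eventually.of_forall fun x => ?_
    have hne : ((n : ℝ) + 1) ≠ 0 := by positivity
    have hpos : (0 : ℝ) < (n : ℝ) + 1 := by positivity
    have := hf.dist_le_mul (x + ((n : ℝ) + 1)⁻¹) x
    rw [dist_eq_norm] at this
    have hd : dist (x + ((n : ℝ) + 1)⁻¹) x = ((n : ℝ) + 1)⁻¹ := by
      rw [Real.dist_eq]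
      rw [show x + ((n : ℝ) + 1)⁻¹ - x = ((n : ℝ) + 1)⁻¹ by ring]
      rw [abs_of_pos (by positivity)]
    rw [hd] at this
    calc ‖Fn n x‖ = ((n : ℝ) + 1) * ‖f (x + ((n : ℝ) + 1)⁻¹) - f x‖ := by
          rw [hFn]; simp only []; rw [norm_smul]
          simp [abs_of_pos hpos]
      _ ≤ ((n : ℝ) + 1) * ((K : ℝ) * ((n : ℝ) + 1)⁻¹) := by
          exact mul_le_mul_of_nonneg_left this (le_of_lt hpos)
      _ = (K : ℝ) := by field_simp
  have hlim : ∀ᵐ x ∂(volume.restrict (Ioc a b)),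
      Tendsto (fun n => Fn n x) atTop (𝓝 (deriv f x)) := by
    refine ae_restrict_of_ae ?_
    filter_upwards [hf.ae_differentiableAt] with x hx
    exact seq_slope hx.hasDerivAt
  have hDC := MeasureTheory.tendsto_integral_of_dominated_convergence (fun _ => (K : ℝ))
    hmeas (integrable_const _) hbound hlim
  simp only [hFnint] at hDC
  have := tendsto_nhds_unique hDC hRHS
  rw [intervalIntegral.integral_of_le hab]
  exact this

private lemma norm_deriv_le_lip {K : NNReal} {f : ℝ → ℂ} (hf : LipschitzWith K f) (x : ℝ) :
    ‖deriv f x‖ ≤ (K : ℝ) := by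
  by_cases h : DifferentiableAt ℝ f x
  · have hs := hasDerivAt_iff_tendsto_slope.1 h.hasDerivAt
    have hb : ∀ y ∈ ({x}ᶜ : Set ℝ), ‖slope f x y‖ ≤ (K : ℝ) := by
      intro y hy
      have hyx : y ≠ x := hy
      rw [slope, vsub_eq_sub, norm_smul, norm_inv, Real.norm_eq_abs]
      have hd := hf.dist_le_mul y x
      rw [dist_eq_norm, dist_eq_norm] at hd
      rw [inv_mul_le_iff₀ (by
        rw [abs_pos]; exact sub_ne_zero.2 hyx)]
      calc ‖f y - f x‖ ≤ (K : ℝ) * ‖y - x‖ := hd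
        _ = |y - x| * (K : ℝ) := by rw [Real.norm_eq_abs]; ring
    have : ∀ᶠ y in 𝓝[≠] x, ‖slope f x y‖ ≤ (K : ℝ) :=
      eventually_nhdsWithin_of_forall hb
    exact le_of_tendsto (hs.norm) this
  · rw [deriv_zero_of_not_differentiableAt h]; simp

/-- clamp to `[a,b]` -/
private def clmp (a b : ℝ) : ℝ → ℝ := fun x => max a (min b x)

private lemma clmp_lip (a b : ℝ) : LipschitzWith 1 (clmp a b) := by
  have := (LipschitzWith.id.min_const b).const_max a
  unfold clmp; simpa [clmp, min_comm] using this

private lemma clmp_eq {a b x : ℝ} (h : x ∈ Icc a b) : clmp a b x = x := by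
  rcases h with ⟨h1, h2⟩
  simp [clmp, min_eq_right h2, max_eq_right h1]

private lemma clmp_mem {a b : ℝ} (hab : a ≤ b) (x : ℝ) : clmp a b x ∈ Icc a b := by
  constructor
  · exact le_max_left _ _
  · exact max_le hab (min_le_left _ _)

/-- globalization of a Lipschitz-on-Icc function, with eventual equality on the interior -/
private lemma lip_package {K : NNReal} {f : ℝ → ℂ} {a b : ℝ} (hab : a < b)
    (hf : LipschitzOnWith K f (Icc a b)) :
    (∫ x in a..b, deriv f x = f b - f a) ∧
    (∀ᵐ x : ℝ, x ∈ Ioo a b → DifferentiableAt ℝ f x) ∧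
    (∀ x ∈ Ioo a b, ‖deriv f x‖ ≤ (K : ℝ)) := by
  set g : ℝ → ℂ := f ∘ clmp a b with hg
  have hglip : LipschitzWith K g := by
    have := hf.comp ((clmp_lip a b).lipschitzOnWith (s := univ))
      (fun x _ => clmp_mem hab.le x)
    rw [lipschitzOnWith_univ] at this
    simpa using this
  have hagree : ∀ x ∈ Icc a b, g x = f x := fun x hx => by
    rw [hg]; simp [Function.comp, clmp_eq hx]
  have hev : ∀ x ∈ Ioo a b, f =ᶠ[𝓝 x] g := by
    intro x hx
    filter_upwards [Ioo_mem_nhds hx.1 hx.2] with y hy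
    exact (hagree y (Ioo_subset_Icc_self hy)).symm
  have hderiv_eq : ∀ x ∈ Ioo a b, deriv f x = deriv g x := fun x hx =>
    (hev x hx).deriv_eq
  have haeb : ∀ᵐ x : ℝ, x ≠ b := by
    have : (volume ({b} : Set ℝ)) = 0 := measure_singleton b
    rw [ae_iff]
    simpa [Ne, not_not] using this
  refine ⟨?_, ?_, ?_⟩
  · have h1 : ∫ x in a..b, deriv f x = ∫ x in a..b, deriv g x := by
      refine intervalIntegral.integral_congr_ae ?_
      filter_upwards [haeb] with x hxb hxI
      rw [uIoc_of_le hab.le] at hxI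
      exact hderiv_eq x ⟨hxI.1, lt_of_le_of_ne hxI.2 hxb⟩
    rw [h1, ftc_lipschitz hglip hab.le, hagree a (left_mem_Icc.2 hab.le),
      hagree b (right_mem_Icc.2 hab.le)]
  · filter_upwards [hglip.ae_differentiableAt] with x hx hxI
    exact ((hev x hxI).differentiableAt_iff).2 hx
  · intro x hx
    rw [hderiv_eq x hx]
    exact norm_deriv_le_lip hglip x

private lemma lip_mul {f g : ℝ → ℂ} {s : Set ℝ} (hs : IsCompact s)
    (hf : ∃ K, LipschitzOnWith K f s) (hg : ∃ K, LipschitzOnWith K g s) :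
    ∃ K, LipschitzOnWith K (fun x => f x * g x) s := by
  obtain ⟨Kf, hf⟩ := hf
  obtain ⟨Kg, hg⟩ := hg
  obtain ⟨Cf, hCf⟩ := hs.exists_bound_of_continuousOn hf.continuousOn
  obtain ⟨Cg, hCg⟩ := hs.exists_bound_of_continuousOn hg.continuousOn
  set R : ℝ := (Kf : ℝ) * max Cg 0 + max Cf 0 * (Kg : ℝ) with hR
  refine ⟨R.toNNReal, ?_⟩
  rw [lipschitzOnWith_iff_dist_le_mul]
  intro x hx y hy
  have hd1 : dist (f x * g x) (f y * g y) ≤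
      ‖f x‖ * dist (g x) (g y) + dist (f x) (f y) * ‖g y‖ := by
    rw [dist_eq_norm, dist_eq_norm, dist_eq_norm]
    calc ‖f x * g x - f y * g y‖ = ‖f x * (g x - g y) + (f x - f y) * g y‖ := by ring_nf
      _ ≤ ‖f x * (g x - g y)‖ + ‖(f x - f y) * g y‖ := norm_add_le _ _
      _ = ‖f x‖ * ‖g x - g y‖ + ‖f x - f y‖ * ‖g y‖ := by rw [norm_mul, norm_mul]
  have h2 := (lipschitzOnWith_iff_dist_le_mul.1 hf) x hx y hy
  have h3 := (lipschitzOnWith_iff_dist_le_mul.1 hg) x hx y hy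
  have h4 : ‖f x‖ ≤ max Cf 0 := le_trans (hCf x hx) (le_max_left _ _)
  have h5 : ‖g y‖ ≤ max Cg 0 := le_trans (hCg y hy) (le_max_left _ _)
  have hRle : R ≤ (R.toNNReal : ℝ) := Real.le_coe_toNNReal R
  have hdist : (0:ℝ) ≤ dist x y := dist_nonneg
  have hfinal : dist (f x * g x) (f y * g y) ≤ R * dist x y := by
    calc dist (f x * g x) (f y * g y) ≤ ‖f x‖ * dist (g x) (g y) + dist (f x) (f y) * ‖g y‖ := hd1
      _ ≤ max Cf 0 * ((Kg : ℝ) * dist x y) + (Kf : ℝ) * dist x y * max Cg 0 := by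
          have t1 : ‖f x‖ * dist (g x) (g y) ≤ max Cf 0 * ((Kg : ℝ) * dist x y) :=
            mul_le_mul h4 h3 dist_nonneg (le_max_right _ _)
          have t2 : dist (f x) (f y) * ‖g y‖ ≤ (Kf : ℝ) * dist x y * max Cg 0 :=
            mul_le_mul h2 h5 (norm_nonneg _) (by positivity)
          linarith
      _ = R * dist x y := by rw [hR]; ring
  exact hfinal.trans (mul_le_mul_of_nonneg_right hRle hdist)

private lemma lip_smooth {f : ℝ → ℂ} (hd : Differentiable ℝ f) (hdc : Continuous (deriv f))
    {a b : ℝ} : ∃ K, LipschitzOnWith K f (Icc a b) := by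
  obtain ⟨C, hC⟩ := (isCompact_Icc (a := a) (b := b)).exists_bound_of_continuousOn
    hdc.continuousOn
  refine ⟨C.toNNReal, ?_⟩
  refine Convex.lipschitzOnWith_of_nnnorm_deriv_le (fun x _ => hd x) (fun x hx => ?_)
    (convex_Icc a b)
  have := hC x hx
  have h2 : (‖deriv f x‖₊ : ℝ) ≤ C := by simpa using this
  exact NNReal.coe_le_coe.1 (h2.trans (Real.le_coe_toNNReal C))

private lemma lip_ofReal {f : ℝ → ℝ} {s : Set ℝ} (hf : ∃ K, LipschitzOnWith K f s) :
    ∃ K, LipschitzOnWith K (fun x => (f x : ℂ)) s := by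
  obtain ⟨K, hK⟩ := hf
  exact ⟨1 * K, (Complex.isometry_ofReal.lipschitz).comp_lipschitzOnWith hK⟩

private lemma lip_add {f g : ℝ → ℂ} {s : Set ℝ} (hf : ∃ K, LipschitzOnWith K f s)
    (hg : ∃ K, LipschitzOnWith K g s) : ∃ K, LipschitzOnWith K (fun x => f x + g x) s := by
  obtain ⟨Kf, hf⟩ := hf
  obtain ⟨Kg, hg⟩ := hg
  refine ⟨Kf + Kg, ?_⟩
  rw [lipschitzOnWith_iff_dist_le_mul] at *
  intro x hx y hy
  calc dist (f x + g x) (f y + g y) ≤ dist (f x) (f y) + dist (g x) (g y) :=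
        dist_add_add_le _ _ _ _
    _ ≤ (Kf : ℝ) * dist x y + (Kg : ℝ) * dist x y := add_le_add (hf x hx y hy) (hg x hx y hy)
    _ = ((Kf + Kg : NNReal) : ℝ) * dist x y := by push_cast; ring

private lemma lip_sub {f g : ℝ → ℂ} {s : Set ℝ} (hf : ∃ K, LipschitzOnWith K f s)
    (hg : ∃ K, LipschitzOnWith K g s) : ∃ K, LipschitzOnWith K (fun x => f x - g x) s := by
  obtain ⟨Kf, hf⟩ := hf
  obtain ⟨Kg, hg⟩ := hg
  refine ⟨Kf + Kg, ?_⟩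
  rw [lipschitzOnWith_iff_dist_le_mul] at *
  intro x hx y hy
  calc dist (f x - g x) (f y - g y) ≤ dist (f x) (f y) + dist (g x) (g y) :=
        dist_sub_sub_le _ _ _ _
    _ ≤ (Kf : ℝ) * dist x y + (Kg : ℝ) * dist x y := add_le_add (hf x hx y hy) (hg x hx y hy)
    _ = ((Kf + Kg : NNReal) : ℝ) * dist x y := by push_cast; ring

private lemma lip_const {c : ℂ} {s : Set ℝ} : ∃ K, LipschitzOnWith K (fun _ => c) s :=
  ⟨0, (LipschitzWith.const c).lipschitzOnWith⟩

private lemma deriv_conj_comp {w : ℝ → ℂ} (hw : Differentiable ℝ w) (x : ℝ) :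
    HasDerivAt (fun y => (starRingEnd ℂ) (w y)) ((starRingEnd ℂ) (deriv w x)) x := by
  have h1 : HasDerivAt w (deriv w x) x := (hw x).hasDerivAt
  have h2 := (Complex.conjCLE.toContinuousLinearMap.hasFDerivAt
    (x := w x)).comp_hasDerivAt x h1
  simpa [Function.comp_def] using h2

private lemma ibp_key {L : ℝ} (hL : 0 < L) {F w : ℝ → ℂ}
    (hF : ∃ K, LipschitzOnWith K F (Icc 0 L))
    (hw : ContDiff ℝ (⊤ : ℕ∞) w) (hw0 : w 0 = 0) (hwL : w L = 0) :
    ∫ x in (0:ℝ)..L, deriv F x * (starRingEnd ℂ) (w x)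
      = - ∫ x in (0:ℝ)..L, F x * (starRingEnd ℂ) (deriv w x) := by
  have hwd : Differentiable ℝ w := hw.differentiable (by simp)
  have hwc : Continuous w := hw.continuous
  have hwconj_lip : ∃ K, LipschitzOnWith K (fun x => (starRingEnd ℂ) (w x)) (Icc 0 L) := by
    obtain ⟨K, hK⟩ := lip_smooth (hw.differentiable (by simp)) (hw.continuous_deriv (by simp)) (a := 0) (b := L)
    exact ⟨1 * K, (Complex.conjLIE.lipschitz).comp_lipschitzOnWith hK⟩
  have hGlip : ∃ K, LipschitzOnWith K (fun x => F x * (starRingEnd ℂ) (w x)) (Icc 0 L) :=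
    lip_mul isCompact_Icc hF hwconj_lip
  obtain ⟨KG, hKG⟩ := hGlip
  obtain ⟨hGftc, -, -⟩ := lip_package hL hKG
  obtain ⟨KF, hKF⟩ := hF
  obtain ⟨-, hFae, hFbd⟩ := lip_package hL hKF
  -- the boundary terms vanish
  have hG0 : ∫ x in (0:ℝ)..L, deriv (fun x => F x * (starRingEnd ℂ) (w x)) x = 0 := by
    rw [hGftc, hw0, hwL]; simp
  -- a.e. product rule
  have haeL : ∀ᵐ x : ℝ, x ≠ L := by
    have : (volume ({L} : Set ℝ)) = 0 := measure_singleton L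
    rw [ae_iff]; simpa [Ne, not_not] using this
  have hae_prod : ∀ᵐ x : ℝ, x ∈ uIoc (0:ℝ) L →
      deriv F x * (starRingEnd ℂ) (w x) + F x * (starRingEnd ℂ) (deriv w x)
        = deriv (fun x => F x * (starRingEnd ℂ) (w x)) x := by
    filter_upwards [hFae, haeL] with x hdiff hxL hxI
    rw [uIoc_of_le hL.le] at hxI
    have hxIoo : x ∈ Ioo 0 L := ⟨hxI.1, lt_of_le_of_ne hxI.2 hxL⟩
    exact (((hdiff hxIoo).hasDerivAt.mul (deriv_conj_comp hwd x)).deriv).symm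
  -- integrability
  obtain ⟨Cw, hCw⟩ := (isCompact_Icc (a := (0:ℝ)) (b := L)).exists_bound_of_continuousOn
    hwc.continuousOn
  have hA : IntervalIntegrable (fun x => deriv F x * (starRingEnd ℂ) (w x)) volume 0 L := by
    rw [intervalIntegrable_iff, uIoc_of_le hL.le]
    refine Integrable.mono' (integrable_const ((KF : ℝ) * max Cw 0)) ?_ ?_
    · exact ((measurable_deriv F).mul
        (Complex.conjLIE.continuous.comp hwc).measurable).aestronglyMeasurable
    · filter_upwards [ae_restrict_mem measurableSet_Ioc, ae_restrict_of_ae haeL]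
        with x hxI hxL
      have hxIoo : x ∈ Ioo 0 L := ⟨hxI.1, lt_of_le_of_ne hxI.2 hxL⟩
      rw [norm_mul]
      have h1 : ‖deriv F x‖ ≤ (KF : ℝ) := hFbd x hxIoo
      have h2 : ‖(starRingEnd ℂ) (w x)‖ ≤ max Cw 0 := by
        rw [RCLike.norm_conj]
        exact (hCw x (Ioo_subset_Icc_self hxIoo)).trans (le_max_left _ _)
      exact mul_le_mul h1 h2 (norm_nonneg _) (NNReal.coe_nonneg KF)
  have hB : IntervalIntegrable (fun x => F x * (starRingEnd ℂ) (deriv w x)) volume 0 L := by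
    apply ContinuousOn.intervalIntegrable
    rw [uIcc_of_le hL.le]
    exact hKF.continuousOn.mul
      ((Complex.conjLIE.continuous.comp (hw.continuous_deriv (by simp))).continuousOn)
  have hsum : (∫ x in (0:ℝ)..L, (deriv F x * (starRingEnd ℂ) (w x)
      + F x * (starRingEnd ℂ) (deriv w x))) = 0 := by
    rw [intervalIntegral.integral_congr_ae hae_prod]
    exact hG0
  rw [intervalIntegral.integral_add hA hB] at hsum
  linear_combination hsum

theorem generator_dissipative
    (L η β κ τ : ℝ) (hL : 0 < L) (hη : 0 < η) (hβ : 0 < β) (hκ : 0 < κ) (hτ : 0 < τ)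
    (m δ p : ℝ → ℝ)
    (hmLip : ∃ K, LipschitzOnWith K m (Icc 0 L))
    (hδLip : ∃ K, LipschitzOnWith K δ (Icc 0 L))
    (hpLip : ∃ K, LipschitzOnWith K p (Icc 0 L))
    (hmpos : ∀ x ∈ Icc (0 : ℝ) L, 0 < m x)
    (hδpos : ∀ x ∈ Icc (0 : ℝ) L, 0 < δ x)
    (hppos : ∀ x ∈ Icc (0 : ℝ) L, 0 < p x)
    (u w θ q : ℝ → ℂ)
    (hu : ContDiff ℝ (⊤ : ℕ∞) u) (hw : ContDiff ℝ (⊤ : ℕ∞) w)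
    (hθ : ContDiff ℝ (⊤ : ℕ∞) θ) (hq : ContDiff ℝ (⊤ : ℕ∞) q)
    (hw0 : w 0 = 0) (hwL : w L = 0) (hθ0 : θ 0 = 0) (hθL : θ L = 0) :
    ((∫ x in (0 : ℝ)..L, (p x : ℂ) * deriv w x * conj (deriv u x))
      + (∫ x in (0 : ℝ)..L,
          deriv (fun y => (p y : ℂ) * deriv u y + 2 * (δ y : ℂ) * deriv w y
            - (η : ℂ) * θ y) x * conj (w x))
      + (∫ x in (0 : ℝ)..L, (-(κ : ℂ) * deriv q x - (η : ℂ) * deriv w x) * conj (θ x))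
      - ∫ x in (0 : ℝ)..L, ((κ : ℂ) * deriv θ x + (β : ℂ) * q x) * conj (q x)).re
      = -2 * (∫ x in (0 : ℝ)..L, δ x * ‖deriv w x‖ ^ 2)
          - β * ∫ x in (0 : ℝ)..L, ‖q x‖ ^ 2
    ∧ -2 * (∫ x in (0 : ℝ)..L, δ x * ‖deriv w x‖ ^ 2)
          - β * (∫ x in (0 : ℝ)..L, ‖q x‖ ^ 2) ≤ 0 := by
  -- continuity and differentiability facts
  have hud : Differentiable ℝ u := hu.differentiable (by simp)
  have hwd : Differentiable ℝ w := hw.differentiable (by simp)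
  have hθd : Differentiable ℝ θ := hθ.differentiable (by simp)
  have hqd : Differentiable ℝ q := hq.differentiable (by simp)
  have hcu' : Continuous (deriv u) := hu.continuous_deriv (by simp)
  have hcw' : Continuous (deriv w) := hw.continuous_deriv (by simp)
  have hcθ' : Continuous (deriv θ) := hθ.continuous_deriv (by simp)
  have hcq' : Continuous (deriv q) := hq.continuous_deriv (by simp)
  have hconjC : Continuous (starRingEnd ℂ) := Complex.conjLIE.continuous
  have hpc : ContinuousOn (fun x => (p x : ℂ)) (Icc 0 L) :=
    Complex.continuous_ofReal.comp_continuousOn hpLip.choose_spec.continuousOn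
  have hδc : ContinuousOn (fun x => (δ x : ℂ)) (Icc 0 L) :=
    Complex.continuous_ofReal.comp_continuousOn hδLip.choose_spec.continuousOn
  -- ∞-smoothness of derivatives
  have hui : ContDiff ℝ (((⊤ : ℕ∞)) : WithTop ℕ∞) (deriv u) :=
    (contDiff_infty_iff_deriv.1 (hu.of_le (by simp))).2
  have hwi : ContDiff ℝ (((⊤ : ℕ∞)) : WithTop ℕ∞) (deriv w) :=
    (contDiff_infty_iff_deriv.1 (hw.of_le (by simp))).2
  -- Lipschitz data for smooth functions (on Icc 0 L)
  have lipu' : ∃ K, LipschitzOnWith K (deriv u) (Icc (0:ℝ) L) :=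
    lip_smooth (hui.differentiable (by simp)) (hui.continuous_deriv (by simp))
  have lipw' : ∃ K, LipschitzOnWith K (deriv w) (Icc (0:ℝ) L) :=
    lip_smooth (hwi.differentiable (by simp)) (hwi.continuous_deriv (by simp))
  have lipθ : ∃ K, LipschitzOnWith K θ (Icc (0:ℝ) L) :=
    lip_smooth hθd (hθ.continuous_deriv (by simp))
  -- the Lipschitz-on-Icc function F
  have hFlip : ∃ K, LipschitzOnWith K
      (fun y => (p y : ℂ) * deriv u y + 2 * (δ y : ℂ) * deriv w y - (η : ℂ) * θ y)
      (Icc (0:ℝ) L) := by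
    have t1 : ∃ K, LipschitzOnWith K (fun y => (p y : ℂ) * deriv u y) (Icc (0:ℝ) L) :=
      lip_mul isCompact_Icc (lip_ofReal hpLip) lipu'
    have t2 : ∃ K, LipschitzOnWith K (fun y => 2 * (δ y : ℂ) * deriv w y) (Icc (0:ℝ) L) :=
      lip_mul isCompact_Icc (lip_mul isCompact_Icc lip_const (lip_ofReal hδLip)) lipw'
    have t3 : ∃ K, LipschitzOnWith K (fun y => (η : ℂ) * θ y) (Icc (0:ℝ) L) :=
      lip_mul isCompact_Icc lip_const lipθ
    exact lip_sub (lip_add t1 t2) t3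
  -- integrability of all the continuous pieces
  have intCC : ∀ {f : ℝ → ℂ}, ContinuousOn f (Icc (0:ℝ) L) →
      IntervalIntegrable f volume 0 L := fun hf => hf.intervalIntegrable_of_Icc hL.le
  have int1 : IntervalIntegrable (fun x => (p x : ℂ) * deriv u x *
      (starRingEnd ℂ) (deriv w x)) volume 0 L :=
    intCC ((hpc.mul hcu'.continuousOn).mul (hconjC.comp hcw').continuousOn)
  have int2 : IntervalIntegrable (fun x => 2 * (δ x : ℂ) * deriv w x *
      (starRingEnd ℂ) (deriv w x)) volume 0 L :=
    intCC ((((continuousOn_const (c := (2:ℂ))).mul hδc).mul hcw'.continuousOn).mul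
      (hconjC.comp hcw').continuousOn)
  have int3 : IntervalIntegrable (fun x => (η : ℂ) * (θ x *
      (starRingEnd ℂ) (deriv w x))) volume 0 L :=
    intCC (continuousOn_const.mul (hθ.continuous.continuousOn.mul
      (hconjC.comp hcw').continuousOn))
  have int4 : IntervalIntegrable (fun x => deriv q x * (starRingEnd ℂ) (θ x)) volume 0 L :=
    intCC (hcq'.continuousOn.mul (hconjC.comp hθ.continuous).continuousOn)
  have int5 : IntervalIntegrable (fun x => q x * (starRingEnd ℂ) (deriv θ x)) volume 0 L :=
    intCC (hq.continuous.continuousOn.mul (hconjC.comp hcθ').continuousOn)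
  have int6 : IntervalIntegrable (fun x => deriv w x * (starRingEnd ℂ) (θ x)) volume 0 L :=
    intCC (hcw'.continuousOn.mul (hconjC.comp hθ.continuous).continuousOn)
  have int7 : IntervalIntegrable (fun x => deriv θ x * (starRingEnd ℂ) (q x)) volume 0 L :=
    intCC (hcθ'.continuousOn.mul (hconjC.comp hq.continuous).continuousOn)
  have int8 : IntervalIntegrable (fun x => q x * (starRingEnd ℂ) (q x)) volume 0 L :=
    intCC (hq.continuous.continuousOn.mul (hconjC.comp hq.continuous).continuousOn)
  -- key abbreviations
  set R1 : ℝ := ∫ x in (0:ℝ)..L, δ x * ‖deriv w x‖ ^ 2 with hR1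
  set R2 : ℝ := ∫ x in (0:ℝ)..L, ‖q x‖ ^ 2 with hR2
  set z1 : ℂ := ∫ x in (0:ℝ)..L, (p x : ℂ) * deriv w x * conj (deriv u x) with hz1
  set z2 : ℂ := ∫ x in (0:ℝ)..L, θ x * conj (deriv w x) with hz2
  set z3 : ℂ := ∫ x in (0:ℝ)..L, q x * conj (deriv θ x) with hz3
  -- interval-integral commutes with conj
  have iconj : ∀ (f : ℝ → ℂ), (∫ x in (0:ℝ)..L, (starRingEnd ℂ) (f x))
      = (starRingEnd ℂ) (∫ x in (0:ℝ)..L, f x) := fun f => by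
    simp [intervalIntegral, integral_conj, map_sub]
  -- main integration by parts for the second integral
  have hIBP := ibp_key hL hFlip hw hw0 hwL
  -- expand ∫ F * conj (deriv w)
  have hsplitF : (∫ x in (0:ℝ)..L,
      (fun y => (p y : ℂ) * deriv u y + 2 * (δ y : ℂ) * deriv w y - (η : ℂ) * θ y) x *
        (starRingEnd ℂ) (deriv w x))
      = (∫ x in (0:ℝ)..L, (p x : ℂ) * deriv u x * (starRingEnd ℂ) (deriv w x))
        + (∫ x in (0:ℝ)..L, 2 * (δ x : ℂ) * deriv w x * (starRingEnd ℂ) (deriv w x))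
        - (∫ x in (0:ℝ)..L, (η : ℂ) * (θ x * (starRingEnd ℂ) (deriv w x))) := by
    rw [← intervalIntegral.integral_add int1 int2,
      ← intervalIntegral.integral_sub (int1.add int2) int3]
    apply intervalIntegral.integral_congr
    intro x _
    ring
  have hb : (∫ x in (0:ℝ)..L, (p x : ℂ) * deriv u x * (starRingEnd ℂ) (deriv w x))
      = conj z1 := by
    rw [hz1, ← iconj]
    apply intervalIntegral.integral_congr
    intro x _
    simp only [map_mul, Complex.conj_conj, Complex.conj_ofReal]
    ring
  have hcδ : (∫ x in (0:ℝ)..L, 2 * (δ x : ℂ) * deriv w x * (starRingEnd ℂ) (deriv w x))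
      = ((2 * R1 : ℝ) : ℂ) := by
    have hpt : ∀ x, 2 * (δ x : ℂ) * deriv w x * (starRingEnd ℂ) (deriv w x)
        = ((2 * (δ x * ‖deriv w x‖ ^ 2) : ℝ) : ℂ) := fun x => by
      rw [mul_assoc, Complex.mul_conj, Complex.normSq_eq_norm_sq]
      push_cast
      ring
    rw [intervalIntegral.integral_congr (fun x _ => hpt x), intervalIntegral.integral_ofReal]
    norm_cast
    rw [hR1, ← intervalIntegral.integral_const_mul]
  have hdη : (∫ x in (0:ℝ)..L, (η : ℂ) * (θ x * (starRingEnd ℂ) (deriv w x)))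
      = (η : ℂ) * z2 := by
    rw [hz2, intervalIntegral.integral_const_mul]
  -- the smooth integration by parts for q, θ
  have hqθ : (∫ x in (0:ℝ)..L, (deriv q x * (starRingEnd ℂ) (θ x)
      + q x * (starRingEnd ℂ) (deriv θ x))) = 0 := by
    have := intervalIntegral.integral_deriv_mul_eq_sub_of_hasDerivAt
      (u := q) (v := fun x => (starRingEnd ℂ) (θ x))
      (u' := deriv q) (v' := fun x => (starRingEnd ℂ) (deriv θ x))
      (hq.continuous.continuousOn) ((hconjC.comp hθ.continuous).continuousOn)
      (fun x _ => (hqd x).hasDerivAt) (fun x _ => deriv_conj_comp hθd x)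
      (hcq'.intervalIntegrable 0 L) ((hconjC.comp hcθ').intervalIntegrable 0 L)
    rw [this]
    rw [hθ0, hθL]
    simp
  have hq'θ : (∫ x in (0:ℝ)..L, deriv q x * (starRingEnd ℂ) (θ x)) = -z3 := by
    rw [intervalIntegral.integral_add int4 int5] at hqθ
    rw [hz3]
    linear_combination hqθ
  have hw'θ : (∫ x in (0:ℝ)..L, deriv w x * (starRingEnd ℂ) (θ x)) = conj z2 := by
    rw [hz2, ← iconj]
    apply intervalIntegral.integral_congr
    intro x _
    simp only [map_mul, Complex.conj_conj]
    ring
  have hθ'q : (∫ x in (0:ℝ)..L, deriv θ x * (starRingEnd ℂ) (q x)) = conj z3 := by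
    rw [hz3, ← iconj]
    apply intervalIntegral.integral_congr
    intro x _
    simp only [map_mul, Complex.conj_conj]
    ring
  have hqq : (∫ x in (0:ℝ)..L, q x * (starRingEnd ℂ) (q x)) = ((R2 : ℝ) : ℂ) := by
    have hpt : ∀ x, q x * (starRingEnd ℂ) (q x) = ((‖q x‖ ^ 2 : ℝ) : ℂ) := fun x => by
      rw [Complex.mul_conj, Complex.normSq_eq_norm_sq]
    rw [intervalIntegral.integral_congr (fun x _ => hpt x), intervalIntegral.integral_ofReal,
      hR2]
  -- assemble the three integrals
  have hI2 : (∫ x in (0:ℝ)..L,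
      deriv (fun y => (p y : ℂ) * deriv u y + 2 * (δ y : ℂ) * deriv w y
        - (η : ℂ) * θ y) x * conj (w x))
      = -(conj z1) - ((2 * R1 : ℝ) : ℂ) + (η : ℂ) * z2 := by
    rw [hIBP, hsplitF, hb, hcδ, hdη]
    ring
  have hI3 : (∫ x in (0:ℝ)..L, (-(κ : ℂ) * deriv q x - (η : ℂ) * deriv w x) * conj (θ x))
      = (κ : ℂ) * z3 - (η : ℂ) * conj z2 := by
    have hsplit : (∫ x in (0:ℝ)..L, (-(κ : ℂ) * deriv q x - (η : ℂ) * deriv w x)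
        * (starRingEnd ℂ) (θ x))
        = (-(κ : ℂ)) * (∫ x in (0:ℝ)..L, deriv q x * (starRingEnd ℂ) (θ x))
          + (-(η : ℂ)) * (∫ x in (0:ℝ)..L, deriv w x * (starRingEnd ℂ) (θ x)) := by
      rw [← intervalIntegral.integral_const_mul, ← intervalIntegral.integral_const_mul,
        ← intervalIntegral.integral_add (int4.const_mul _) (int6.const_mul _)]
      apply intervalIntegral.integral_congr
      intro x _
      ring
    rw [hsplit, hq'θ, hw'θ]
    ring
  have hI4 : (∫ x in (0:ℝ)..L, ((κ : ℂ) * deriv θ x + (β : ℂ) * q x) * conj (q x))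
      = (κ : ℂ) * conj z3 + (β : ℂ) * ((R2 : ℝ) : ℂ) := by
    have hsplit : (∫ x in (0:ℝ)..L, ((κ : ℂ) * deriv θ x + (β : ℂ) * q x)
        * (starRingEnd ℂ) (q x))
        = (κ : ℂ) * (∫ x in (0:ℝ)..L, deriv θ x * (starRingEnd ℂ) (q x))
          + (β : ℂ) * (∫ x in (0:ℝ)..L, q x * (starRingEnd ℂ) (q x)) := by
      rw [← intervalIntegral.integral_const_mul, ← intervalIntegral.integral_const_mul,
        ← intervalIntegral.integral_add (int7.const_mul _) (int8.const_mul _)]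
      apply intervalIntegral.integral_congr
      intro x _
      ring
    rw [hsplit, hθ'q, hqq]
  constructor
  · rw [hI2, hI3, hI4]
    simp only [Complex.add_re, Complex.sub_re, Complex.neg_re, Complex.mul_re,
      Complex.ofReal_re, Complex.ofReal_im, Complex.conj_re, Complex.conj_im]
    ring
  · have h1 : 0 ≤ R1 := by
      rw [hR1]
      exact intervalIntegral.integral_nonneg hL.le fun x hx =>
        mul_nonneg (hδpos x hx).le (by positivity)
    have h2 : 0 ≤ R2 := by
      rw [hR2]
      exact intervalIntegral.integral_nonneg hL.le fun x _ => by positivity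
    nlinarith
end
end
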